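/- Let ν = (ν_1 ≥ … ≥ ν_N) ∈ ℤ^N, and let ν = (ν^+, ν^-) be its decomposition into positive and negative parts with modified Frobenius coordinates a_i^± = p_i^± + 1/2, b_i^± = q_i^± + 1/2 of the Young diagrams ν^±. Setting ṽ_i = ν_i + (N+1)/2 - i, one has the identity of rational functions in s: ∏_{i=1}^N (s - (N+1)/2 + i)/(s - ṽ_i) = ∏_{i=1}^{d^+} (s - N/2 + b_i^+)/(s - N/2 - a_i^+) · ∏_{i=1}^{d^-} (s + N/2 - b_i^-)/(s + N/2 + a_i^-). -/

import Mathlib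

/-- `λ'_{i+1}`, the `(i+1)`-st part (0-based `i`) of the transposed Young diagram of
`λ`, where `λ j` is the `(j+1)`-st part of `λ`. -/
noncomputable def conjPart (lam : ℕ → ℕ) (i : ℕ) : ℕ := Nat.card {j : ℕ | i + 1 ≤ lam j}

/-- `d(λ)`, the number of diagonal boxes of the Young diagram `λ`. -/
noncomputable def frobLen (lam : ℕ → ℕ) : ℕ := Nat.card {i : ℕ | i + 1 ≤ lam i}

/-- The modified Frobenius coordinate `a_{i+1} = λ_{i+1} - (i+1) + 1/2` (0-based `i`). -/
noncomputable def aCoord (lam : ℕ → ℕ) (i : ℕ) : ℚ := (lam i : ℚ) - i - 1 / 2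

/-- The modified Frobenius coordinate `b_{i+1} = λ'_{i+1} - (i+1) + 1/2` (0-based `i`). -/
noncomputable def bCoord (lam : ℕ → ℕ) (i : ℕ) : ℚ := (conjPart lam i : ℚ) - i - 1 / 2

/-- The Young diagram `ν⁺` of positive parts of a signature `ν` (padded by zeros). -/
def posPart (N : ℕ) (ν : Fin N → ℤ) : ℕ → ℕ :=
  fun i => if h : i < N then (ν ⟨i, h⟩).toNat else 0

/-- The Young diagram `ν⁻` of negated negative parts of a signature `ν`
(padded by zeros). -/
def negPart (N : ℕ) (ν : Fin N → ℤ) : ℕ → ℕ :=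
  fun i => if h : i < N then (-(ν ⟨N - 1 - i, by omega⟩)).toNat else 0

/-! Let `λ` be a partition with at most `N` rows and `d` diagonal boxes. The integers
`λ_i - i - 1` (`i < N`) are distinct, and so are the `j - λ'_j` (`j < d`); the two families are
disjoint, and together they fill exactly `{-N, …, -1}` and the arm lengths `λ_j - j - 1`
(`j < d`): the left side has `N + d` elements and lies in the right one, which has at most
`N + d`.
This is Frobenius' complementarity, and it gives a product identity for any function `f`
on `ℤ`. Splitting `ν_i - i - 1` into the contributions of `ν⁺` and of `ν⁻` (the latter
seen through the reflection `m ↦ -N - 1 - m`) and taking `f m = s - (N + 1)/2 - m` yields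
the claim. -/

theorem Set.mem_iff_lt_natCard_of_isLowerSet {s : Set ℕ} {N : ℕ} (hs : IsLowerSet s)
    (hN : N ∉ s) (i : ℕ) : i ∈ s ↔ i < Nat.card s := by
  obtain h | ⟨a, rfl⟩ := hs.eq_univ_or_Iio
  · exact absurd (h ▸ Set.mem_univ N) hN
  · simp

namespace Frobenius

open Finset

variable {lam : ℕ → ℕ} {N : ℕ}

theorem lt_frobLen_iff (hlam : Antitone lam) (hN : lam N = 0) (i : ℕ) :
    i < frobLen lam ↔ i < lam i :=
  (Set.mem_iff_lt_natCard_of_isLowerSet (s := {i | i < lam i}) (N := N)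
    (fun a b hba ha => lt_of_lt_of_le (hba.trans_lt ha) (hlam hba)) (by simp [hN]) i).symm

theorem lt_conjPart_iff (hlam : Antitone lam) (hN : lam N = 0) (i j : ℕ) :
    i < conjPart lam j ↔ j < lam i :=
  (Set.mem_iff_lt_natCard_of_isLowerSet (s := {i | j < lam i}) (N := N)
    (fun a b hba ha => lt_of_lt_of_le ha (hlam hba)) (by simp [hN]) i).symm

theorem conjPart_le (hlam : Antitone lam) (hN : lam N = 0) (j : ℕ) : conjPart lam j ≤ N :=
  le_of_not_gt fun h => by have := (lt_conjPart_iff hlam hN N j).mp h; omega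

theorem conjPart_antitone (hlam : Antitone lam) (hN : lam N = 0) : Antitone (conjPart lam) :=
  fun j j' hj => le_of_forall_lt fun i hi => by
    rw [lt_conjPart_iff hlam hN] at hi ⊢
    omega

theorem strictAnti_sub_index (hlam : Antitone lam) :
    StrictAnti fun i : ℕ => (lam i : ℤ) - i - 1 :=
  fun i j hij => by have := hlam hij.le; dsimp only; omega

theorem strictMono_index_sub_conjPart (hlam : Antitone lam) (hN : lam N = 0) :
    StrictMono fun j : ℕ => (j : ℤ) - conjPart lam j :=
  fun i j hij => by have := conjPart_antitone hlam hN hij.le; dsimp only; omega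

theorem image_sub_disjoint_image_sub_conjPart (hlam : Antitone lam) (hN : lam N = 0) :
    Disjoint ((range N).image fun i : ℕ => (lam i : ℤ) - i - 1)
      ((range (frobLen lam)).image fun j : ℕ => (j : ℤ) - conjPart lam j) := by
  simp only [disjoint_left, mem_image, mem_range]
  rintro _ ⟨i, -, rfl⟩ ⟨j, hj, he⟩
  have := lt_conjPart_iff hlam hN i j
  have := lt_frobLen_iff hlam hN j
  omega

theorem image_neg_disjoint_image_sub (hlam : Antitone lam) (hN : lam N = 0) :
    Disjoint ((range N).image fun i : ℕ => -(i : ℤ) - 1)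
      ((range (frobLen lam)).image fun j : ℕ => (lam j : ℤ) - j - 1) := by
  simp only [disjoint_left, mem_image, mem_range]
  rintro _ ⟨i, -, rfl⟩ ⟨j, hj, he⟩
  have := lt_frobLen_iff hlam hN j
  omega

theorem image_union_image_eq (hlam : Antitone lam) (hN : lam N = 0) :
    (range N).image (fun i : ℕ => (lam i : ℤ) - i - 1) ∪
        (range (frobLen lam)).image (fun j : ℕ => (j : ℤ) - conjPart lam j) =
      (range N).image (fun i : ℕ => -(i : ℤ) - 1) ∪
        (range (frobLen lam)).image (fun j : ℕ => (lam j : ℤ) - j - 1) := by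
  have hd := lt_frobLen_iff hlam hN
  have hc := lt_conjPart_iff hlam hN
  refine eq_of_subset_of_card_le ?_ ?_
  · simp only [subset_iff, mem_union, mem_image, mem_range]
    rintro _ (⟨i, hi, rfl⟩ | ⟨j, hj, rfl⟩)
    · by_cases hi' : i < lam i
      · exact Or.inr ⟨i, (hd i).mpr hi', rfl⟩
      · exact Or.inl ⟨i - lam i, by omega, by omega⟩
    · have := (hc j j).mpr ((hd j).mp hj)
      have := conjPart_le hlam hN j
      exact Or.inl ⟨conjPart lam j - j - 1, by omega, by omega⟩
  · rw [card_union_of_disjoint (image_sub_disjoint_image_sub_conjPart hlam hN),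
      card_image_of_injective _ (strictAnti_sub_index hlam).injective,
      card_image_of_injective _ (strictMono_index_sub_conjPart hlam hN).injective]
    refine (card_union_le _ _).trans (add_le_add ?_ ?_) <;> exact card_image_le.trans (by simp)

theorem prod_frobenius {M : Type*} [CommMonoid M] (f : ℤ → M) (hlam : Antitone lam)
    (hN : lam N = 0) :
    (∏ i ∈ range N, f ((lam i : ℤ) - i - 1)) *
        ∏ j ∈ range (frobLen lam), f ((j : ℤ) - conjPart lam j) =
      (∏ i ∈ range N, f (-(i : ℤ) - 1)) * ∏ j ∈ range (frobLen lam), f ((lam j : ℤ) - j - 1) := by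
  have hS := (strictAnti_sub_index hlam).injective
  have hI : Function.Injective fun i : ℕ => -(i : ℤ) - 1 := fun a b h => by simp_all
  rw [← prod_image hS.injOn, ← prod_image (strictMono_index_sub_conjPart hlam hN).injective.injOn,
    ← prod_image hI.injOn, ← prod_image hS.injOn,
    ← prod_union (image_sub_disjoint_image_sub_conjPart hlam hN),
    ← prod_union (image_neg_disjoint_image_sub hlam hN), image_union_image_eq hlam hN]

theorem prod_frobenius_reflect {M : Type*} [CommMonoid M] (f : ℤ → M) (hlam : Antitone lam)
    (hN : lam N = 0) :
    (∏ i ∈ range N, f ((i : ℤ) - lam i - N)) *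
        ∏ j ∈ range (frobLen lam), f ((conjPart lam j : ℤ) - j - N - 1) =
      (∏ i ∈ range N, f (-(i : ℤ) - 1)) * ∏ j ∈ range (frobLen lam), f ((j : ℤ) - lam j - N) := by
  rw [← prod_range_reflect (fun i : ℕ => f (-(i : ℤ) - 1))]
  convert prod_frobenius (fun m => f (-N - 1 - m)) hlam hN using 2 <;>
    refine prod_congr rfl fun i hi => congrArg f ?_ <;> simp only [mem_range] at hi <;> omega

end Frobenius

section Signature

open Finset

variable {N : ℕ} {ν : Fin N → ℤ}

theorem posPart_antitone (hν : Antitone ν) : Antitone (posPart N ν) := by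
  intro i j hij
  unfold _root_.posPart
  split_ifs
  · exact Int.toNat_le_toNat (hν (Fin.mk_le_mk.mpr hij))
  all_goals omega

theorem negPart_antitone (hν : Antitone ν) : Antitone (negPart N ν) := by
  intro i j hij
  unfold _root_.negPart
  split_ifs
  · exact Int.toNat_le_toNat (neg_le_neg (hν (Fin.mk_le_mk.mpr (by omega))))
  all_goals omega

theorem posPart_self : posPart N ν N = 0 := by simp [_root_.posPart]

theorem negPart_self : negPart N ν N = 0 := by simp [_root_.negPart]

theorem prod_posPart_mul_prod_negPart {M : Type*} [CommMonoid M] (f : ℤ → M) (ν : Fin N → ℤ) :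
    (∏ i ∈ range N, f ((posPart N ν i : ℤ) - i - 1)) *
        ∏ i ∈ range N, f ((i : ℤ) - negPart N ν i - N) =
      (∏ i : Fin N, f (ν i - i - 1)) * ∏ i ∈ range N, f (-(i : ℤ) - 1) := by
  rw [← prod_range_reflect (fun i : ℕ => f ((i : ℤ) - negPart N ν i - N)),
    ← Fin.prod_univ_eq_prod_range, ← Fin.prod_univ_eq_prod_range, ← Fin.prod_univ_eq_prod_range,
    ← prod_mul_distrib, ← prod_mul_distrib]
  refine prod_congr rfl fun i _ => ?_
  have hi := i.isLt
  have hpos : posPart N ν i = (ν i).toNat := by simp [_root_.posPart]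
  have hneg : negPart N ν (N - 1 - i) = (-ν i).toNat := by
    simp only [_root_.negPart, dif_pos (show N - 1 - i < N by omega)]
    congr 3
    ext
    simp only
    omega
  rw [hpos, hneg]
  rcases le_or_gt 0 (ν i) with h | h
  · congr 2 <;> omega
  · rw [mul_comm]
    congr 2 <;> omega

theorem prod_div_prod_eq_frobenius {K : Type*} [Field K] (f : ℤ → K) (hf : ∀ m, f m ≠ 0)
    (hν : Antitone ν) :
    (∏ i : Fin N, f (-(i : ℤ) - 1)) / ∏ i : Fin N, f (ν i - i - 1) =
      (∏ j ∈ range (frobLen (posPart N ν)), f ((j : ℤ) - conjPart (posPart N ν) j)) /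
          (∏ j ∈ range (frobLen (posPart N ν)), f ((posPart N ν j : ℤ) - j - 1)) *
        ((∏ j ∈ range (frobLen (negPart N ν)),
            f ((conjPart (negPart N ν) j : ℤ) - j - N - 1)) /
          ∏ j ∈ range (frobLen (negPart N ν)), f ((j : ℤ) - negPart N ν j - N)) := by
  have hpos := Frobenius.prod_frobenius f (posPart_antitone hν) posPart_self
  have hneg := Frobenius.prod_frobenius_reflect f (negPart_antitone hν) negPart_self
  have hsplit := prod_posPart_mul_prod_negPart f ν
  have hne {ι : Type} (s : Finset ι) (g : ι → ℤ) : ∏ i ∈ s, f (g i) ≠ 0 :=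
    prod_ne_zero_iff.mpr fun _ _ => hf _
  rw [Fin.prod_univ_eq_prod_range (fun i : ℕ => f (-(i : ℤ) - 1))]
  set A := ∏ i ∈ range N, f (-(i : ℤ) - 1)
  set Sp := ∏ i ∈ range N, f ((posPart N ν i : ℤ) - i - 1)
  set Sm := ∏ i ∈ range N, f ((i : ℤ) - negPart N ν i - N)
  calc A / ∏ i : Fin N, f (ν i - i - 1) = A / Sp * (A / Sm) := by
        rw [div_mul_div_comm, div_eq_div_iff (hne _ _) (mul_ne_zero (hne _ _) (hne _ _))]
        linear_combination A * hsplit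
    _ = _ := by
        congr 1 <;> rw [div_eq_div_iff (hne _ _) (hne _ _)]
        · linear_combination -hpos
        · linear_combination -hneg

end Signature

theorem RatFunc.X_sub_C_ne_zero {K : Type*} [Field K] (c : K) : (X : RatFunc K) - C c ≠ 0 := by
  rw [← RatFunc.algebraMap_X, ← RatFunc.algebraMap_C, ← map_sub]
  exact RatFunc.algebraMap_ne_zero (Polynomial.X_sub_C_ne_zero c)

/-- For a signature `ν = (ν_1 ≥ … ≥ ν_N)` with `ν = (ν⁺, ν⁻)` and modified Frobenius
coordinates `a_i^±, b_i^±` of `ν^±`, setting `ṽ_i = ν_i + (N+1)/2 - i`, one has the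
identity of rational functions in `s`:
`∏_{i=1}^N (s - (N+1)/2 + i)/(s - ṽ_i)
  = ∏_{i=1}^{d⁺} (s - N/2 + b_i⁺)/(s - N/2 - a_i⁺) ·
    ∏_{i=1}^{d⁻} (s + N/2 - b_i⁻)/(s + N/2 + a_i⁻)`. -/
theorem stmt_17 (N : ℕ) (ν : Fin N → ℤ) (hν : ∀ i j : Fin N, i ≤ j → ν j ≤ ν i) :
    (∏ i : Fin N,
        ((RatFunc.X : RatFunc ℚ) - RatFunc.C (((N : ℚ) + 1) / 2 - ((i.val : ℚ) + 1)))) /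
      (∏ i : Fin N,
        ((RatFunc.X : RatFunc ℚ) -
          RatFunc.C ((ν i : ℚ) + ((N : ℚ) + 1) / 2 - ((i.val : ℚ) + 1)))) =
    ((∏ i ∈ Finset.range (frobLen (posPart N ν)),
        ((RatFunc.X : RatFunc ℚ) - RatFunc.C ((N : ℚ) / 2) +
          RatFunc.C (bCoord (posPart N ν) i))) /
      (∏ i ∈ Finset.range (frobLen (posPart N ν)),
        ((RatFunc.X : RatFunc ℚ) - RatFunc.C ((N : ℚ) / 2) -
          RatFunc.C (aCoord (posPart N ν) i)))) *
    ((∏ i ∈ Finset.range (frobLen (negPart N ν)),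
        ((RatFunc.X : RatFunc ℚ) + RatFunc.C ((N : ℚ) / 2) -
          RatFunc.C (bCoord (negPart N ν) i))) /
      (∏ i ∈ Finset.range (frobLen (negPart N ν)),
        ((RatFunc.X : RatFunc ℚ) + RatFunc.C ((N : ℚ) / 2) +
          RatFunc.C (aCoord (negPart N ν) i)))) := by
  have key := prod_div_prod_eq_frobenius
    (fun m : ℤ => (RatFunc.X : RatFunc ℚ) - RatFunc.C (((N : ℚ) + 1) / 2 + m))
    (fun _ => RatFunc.X_sub_C_ne_zero _) hν
  convert key using 4 <;>
    simp only [aCoord, bCoord, map_add, map_sub, map_neg, map_div₀, map_natCast, map_intCast,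
      map_ofNat, map_one, Int.cast_sub, Int.cast_neg, Int.cast_natCast, Int.cast_one] <;>
    ring
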